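/- Let A be an associative algebra with a double Poisson bracket ⟨⟨−,−⟩⟩ and associated bracket {a,b} = m(⟨⟨a,b⟩⟩). Then for all a,b,c ∈ A: {a, ⟨⟨b,c⟩⟩} − ⟨⟨{a,b}, c⟩⟩ − ⟨⟨b, {a,c}⟩⟩ = 0, where {a, u⊗v} = {a,u}⊗v + u⊗{a,v}. -/
import Mathlib


/-!
STATEMENT 10: For a double Poisson bracket `⟨⟨−,−⟩⟩` on `A` with associated
bracket `{a,b} = m(⟨⟨a,b⟩⟩)`, one has
`{a, ⟨⟨b,c⟩⟩} − ⟨⟨{a,b}, c⟩⟩ − ⟨⟨b, {a,c}⟩⟩ = 0`,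
where `{a, u⊗v} = {a,u}⊗v + u⊗{a,v}`.
-/

open TensorProduct

noncomputable section
namespace Stmt10

variable (k : Type) [Field k] (A : Type) [Ring A] [Algebra k A]

/-- The cyclic permutation `σ₍₁₂₃₎` on `A ⊗ A ⊗ A`. -/
def cyc : (A ⊗[k] A) ⊗[k] A →ₗ[k] (A ⊗[k] A) ⊗[k] A :=
  (TensorProduct.assoc k A A A).symm.toLinearMap ∘ₗ
    (TensorProduct.comm k (A ⊗[k] A) A).toLinearMap

/-- `⟨⟨a, −⟩⟩_L` : apply `⟨⟨a,−⟩⟩` to the first tensor factor. -/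
def extL (D : A →ₗ[k] A →ₗ[k] A ⊗[k] A) (a : A) :
    A ⊗[k] A →ₗ[k] (A ⊗[k] A) ⊗[k] A :=
  LinearMap.rTensor A (D a)

/-- The associated bracket `{a,b} = m(⟨⟨a,b⟩⟩)`. -/
def br (D : A →ₗ[k] A →ₗ[k] A ⊗[k] A) (a : A) : A →ₗ[k] A :=
  LinearMap.mul' k A ∘ₗ D a

/-- The extension of `{a,−}` to `A ⊗ A`: `{a, u⊗v} = {a,u}⊗v + u⊗{a,v}`. -/
def brExt (D : A →ₗ[k] A →ₗ[k] A ⊗[k] A) (a : A) : A ⊗[k] A →ₗ[k] A ⊗[k] A :=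
  LinearMap.rTensor A (br k A D a) + LinearMap.lTensor A (br k A D a)

/-- `Φ = m ⊗ 1 : (A⊗A)⊗A → A⊗A`. -/
def Phi : (A ⊗[k] A) ⊗[k] A →ₗ[k] A ⊗[k] A :=
  LinearMap.rTensor A (LinearMap.mul' k A)

/-- `Ψ = (1 ⊗ m) ∘ assoc : (A⊗A)⊗A → A⊗A`. -/
def Psi : (A ⊗[k] A) ⊗[k] A →ₗ[k] A ⊗[k] A :=
  LinearMap.lTensor A (LinearMap.mul' k A) ∘ₗ (TensorProduct.assoc k A A A).toLinearMap

lemma Psi_tmul (u : A ⊗[k] A) (y : A) :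
    Psi k A (u ⊗ₜ[k] y) = u * ((1 : A) ⊗ₜ[k] y) := by
  induction u using TensorProduct.induction_on with
  | zero => rw [zero_tmul, map_zero, zero_mul]
  | tmul p q => simp [Psi, Algebra.TensorProduct.tmul_mul_tmul]
  | add u v hu hv => rw [add_tmul, map_add, hu, hv, add_mul]

lemma Phi_cyc_tmul (u : A ⊗[k] A) (x : A) :
    Phi k A (cyc k A (u ⊗ₜ[k] x)) = (x ⊗ₜ[k] (1 : A)) * u := by
  induction u using TensorProduct.induction_on with
  | zero => rw [zero_tmul, map_zero, map_zero, mul_zero]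
  | tmul p q => simp [Phi, cyc, Algebra.TensorProduct.tmul_mul_tmul]
  | add u v hu hv => rw [add_tmul, map_add, map_add, hu, hv, mul_add]

lemma Psi_cyc_tmul (u : A ⊗[k] A) (x : A) :
    Psi k A (cyc k A (u ⊗ₜ[k] x)) = x ⊗ₜ[k] (LinearMap.mul' k A u) := by
  induction u using TensorProduct.induction_on with
  | zero => rw [zero_tmul, map_zero, map_zero, map_zero, tmul_zero]
  | tmul p q => simp [Psi, cyc]
  | add u v hu hv => rw [add_tmul, map_add, map_add, hu, hv, map_add, tmul_add]

lemma comm_Psi (w : (A ⊗[k] A) ⊗[k] A) :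
    (TensorProduct.comm k A A) (Psi k A w) = Phi k A (cyc k A (cyc k A w)) := by
  have : (TensorProduct.comm k A A).toLinearMap ∘ₗ Psi k A =
      Phi k A ∘ₗ cyc k A ∘ₗ cyc k A := by
    apply TensorProduct.ext_threefold
    intro p q r
    simp [Psi, Phi, cyc, Algebra.TensorProduct.tmul_mul_tmul]
  exact LinearMap.congr_fun this w

lemma comm_Phi_cyc (w : (A ⊗[k] A) ⊗[k] A) :
    (TensorProduct.comm k A A) (Phi k A (cyc k A w)) = Psi k A (cyc k A (cyc k A w)) := by
  have : (TensorProduct.comm k A A).toLinearMap ∘ₗ Phi k A ∘ₗ cyc k A =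
      Psi k A ∘ₗ cyc k A ∘ₗ cyc k A := by
    apply TensorProduct.ext_threefold
    intro p q r
    simp [Psi, Phi, cyc, Algebra.TensorProduct.tmul_mul_tmul]
  exact LinearMap.congr_fun this w

lemma Phi_extL (D : A →ₗ[k] A →ₗ[k] A ⊗[k] A) (a : A) (t : A ⊗[k] A) :
    Phi k A (extL k A D a t) = LinearMap.rTensor A (br k A D a) t := by
  have : Phi k A ∘ₗ extL k A D a = LinearMap.rTensor A (br k A D a) := by
    apply TensorProduct.ext'
    intro x y
    simp [Phi, extL, br]
  exact LinearMap.congr_fun this t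

lemma lTensor_br (D : A →ₗ[k] A →ₗ[k] A ⊗[k] A) (a : A) (t : A ⊗[k] A) :
    LinearMap.lTensor A (br k A D a) t =
      Psi k A (cyc k A (extL k A D a ((TensorProduct.comm k A A) t))) := by
  induction t using TensorProduct.induction_on with
  | zero => simp
  | tmul x y => simp [extL, Psi_cyc_tmul, br]
  | add u v hu hv => simp [map_add, hu, hv]

/-- The Leibniz rule extended to `A ⊗ A` through the multiplication map. -/
lemma leib_ext (D : A →ₗ[k] A →ₗ[k] A ⊗[k] A)
    (hLeibniz : ∀ a b c : A,
      D a (b * c) = D a b * ((1 : A) ⊗ₜ[k] c) + (b ⊗ₜ[k] (1 : A)) * D a c)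
    (b : A) (t : A ⊗[k] A) :
    D b (LinearMap.mul' k A t) =
      Psi k A (extL k A D b t) +
        Phi k A (cyc k A (extL k A D b ((TensorProduct.comm k A A) t))) := by
  induction t using TensorProduct.induction_on with
  | zero => simp
  | tmul x y =>
    simp only [LinearMap.mul'_apply, comm_tmul, extL, LinearMap.rTensor_tmul]
    rw [hLeibniz b x y, Psi_tmul, Phi_cyc_tmul]
  | add u v hu hv => simp [map_add, hu, hv]; abel

theorem statement10
    (D : A →ₗ[k] A →ₗ[k] A ⊗[k] A)
    (hLeibniz : ∀ a b c : A,
      D a (b * c) = D a b * ((1 : A) ⊗ₜ[k] c) + (b ⊗ₜ[k] (1 : A)) * D a c)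
    (hSkew : ∀ a b : A, D a b = - (TensorProduct.comm k A A) (D b a))
    (hJacobi : ∀ a b c : A,
      extL k A D a (D b c) + cyc k A (extL k A D b (D c a)) +
        cyc k A (cyc k A (extL k A D c (D a b))) = 0) :
    ∀ a b c : A,
      brExt k A D a (D b c) - D (br k A D a b) c - D b (br k A D a c) = 0 := by
  intro a b c
  -- skew-symmetry rewritten: comm (D x y) = - D y x
  have hsk : ∀ x y : A, (TensorProduct.comm k A A) (D x y) = - D y x := by
    intro x y
    rw [hSkew y x]
    simp
  have hbr : ∀ x y : A, br k A D x y = LinearMap.mul' k A (D x y) := fun _ _ => rfl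
  -- e1 : second-slot term
  have e1 : D b (br k A D a c) =
      Psi k A (extL k A D b (D a c)) - Phi k A (cyc k A (extL k A D b (D c a))) := by
    rw [hbr, leib_ext k A D hLeibniz b (D a c), hsk a c]
    simp [sub_eq_add_neg]
  -- e2 : first-slot term
  have e2 : D (br k A D a b) c =
      - Phi k A (cyc k A (cyc k A (extL k A D c (D a b)))) +
        Psi k A (cyc k A (cyc k A (extL k A D c (D b a)))) := by
    rw [hSkew (br k A D a b) c, hbr, leib_ext k A D hLeibniz c (D a b), map_add,
      comm_Psi, comm_Phi_cyc, hsk a b]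
    simp only [map_neg, neg_neg]
    abel
  -- e3 : lTensor part of brExt
  have e3 : LinearMap.lTensor A (br k A D a) (D b c) =
      - Psi k A (cyc k A (extL k A D a (D c b))) := by
    rw [lTensor_br, hsk b c]
    simp
  -- e4 : rTensor part of brExt
  have e4 : LinearMap.rTensor A (br k A D a) (D b c) = Phi k A (extL k A D a (D b c)) :=
    (Phi_extL k A D a (D b c)).symm
  have hb : brExt k A D a (D b c) =
      LinearMap.rTensor A (br k A D a) (D b c) +
        LinearMap.lTensor A (br k A D a) (D b c) := rfl
  rw [hb, e1, e2, e3, e4]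
  have j1 := hJacobi a b c
  have j2 := hJacobi b a c
  have hΦ : Phi k A (extL k A D a (D b c)) + Phi k A (cyc k A (extL k A D b (D c a))) +
      Phi k A (cyc k A (cyc k A (extL k A D c (D a b)))) = 0 := by
    rw [← map_add, ← map_add, j1, map_zero]
  have hΨ : Psi k A (extL k A D b (D a c)) + Psi k A (cyc k A (extL k A D a (D c b))) +
      Psi k A (cyc k A (cyc k A (extL k A D c (D b a)))) = 0 := by
    rw [← map_add, ← map_add, j2, map_zero]
  have expand : Phi k A (extL k A D a (D b c)) + - Psi k A (cyc k A (extL k A D a (D c b))) -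
      (- Phi k A (cyc k A (cyc k A (extL k A D c (D a b)))) +
        Psi k A (cyc k A (cyc k A (extL k A D c (D b a))))) -
      (Psi k A (extL k A D b (D a c)) - Phi k A (cyc k A (extL k A D b (D c a)))) =
      (Phi k A (extL k A D a (D b c)) + Phi k A (cyc k A (extL k A D b (D c a))) +
        Phi k A (cyc k A (cyc k A (extL k A D c (D a b))))) -
      (Psi k A (extL k A D b (D a c)) + Psi k A (cyc k A (extL k A D a (D c b))) +
        Psi k A (cyc k A (cyc k A (extL k A D c (D b a))))) := by abel
  rw [expand, hΦ, hΨ, sub_zero]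

end Stmt10
end
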